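/- There exist a hyperconvex diversity (X, δ) whose induced metric space (X, d) is a hyperconvex metric space, and a mapping T : X → X that is nonexpansive with respect to the induced metric d (indeed an isometry of (X,d)) but is not nonexpansive in the sense of diversities, i.e., there exists a finite set A ⊆ X with δ(T(A)) > δ(A). -/

import Mathlib

/-!
Let `Ξ` be the union of the coordinate axes of `ℝ²`, an `ℝ`-tree for the `ℓ¹` distance. Its
Steiner diversity `σ` (the length of the spanned subtree, here the sum of the two coordinate
widths) is hyperconvex by a Helly argument: the points `z` with `σ(Y ∪ {z}) ≤ r Y` form a subtree
of `Ξ`, and pairwise intersecting subtrees of `Ξ` have a common point. Hence the metric of `Ξ` is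
hyperconvex, and then so is the diameter diversity `σ∞` of that metric.

On `Ξ × Ξ`, `δ A = max (σ∞ (π₁ A)) (σ (π₂ A))` is again hyperconvex, and its induced metric
`max (d x₁ y₁) (d x₂ y₂)` is symmetric in the two factors, so swapping them is an isometry. But
for the tripod `B = {(1,0), (0,1), (0,-1)}` and any `c`, `δ (B × {c}) = σ∞ B = 2` while
`δ ({c} × B) = σ B = 3`.
-/

/-- A diversity on `X`: a real-valued function on finite subsets of `X` which is
nonnegative, vanishes exactly on sets of cardinality at most one, and satisfies the
triangle inequality `δ(A ∪ C) ≤ δ(A ∪ B) + δ(B ∪ C)` for nonempty `B`. -/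
structure Diversity (X : Type*) [DecidableEq X] where
  delta : Finset X → ℝ
  nonneg : ∀ A, 0 ≤ delta A
  eq_zero_iff : ∀ A, delta A = 0 ↔ A.card ≤ 1
  triangle : ∀ A B C : Finset X, B.Nonempty →
    delta (A ∪ C) ≤ delta (A ∪ B) + delta (B ∪ C)

namespace Diversity

variable {X : Type*} [DecidableEq X]

/-- A diversity is hyperconvex if for every `r : ⟨X⟩ → ℝ` with `r ∅ = 0` such that
`δ(⋃_{A ∈ 𝒜} A) ≤ ∑_{A ∈ 𝒜} r A` for every finite collection `𝒜` of finite subsets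
of `X`, there is `z ∈ X` with `δ({z} ∪ Y) ≤ r Y` for all finite `Y ⊆ X`. -/
def Hyperconvex (D : Diversity X) : Prop :=
  ∀ r : Finset X → ℝ, r ∅ = 0 →
    (∀ 𝒜 : Finset (Finset X), D.delta (𝒜.sup id) ≤ ∑ A ∈ 𝒜, r A) →
    ∃ z : X, ∀ Y : Finset X, D.delta (insert z Y) ≤ r Y

/-- A diversity is bounded if its values are uniformly bounded above. -/
def Bounded (D : Diversity X) : Prop :=
  ∃ M : ℝ, 0 ≤ M ∧ ∀ A : Finset X, D.delta A ≤ M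

end Diversity

namespace Diversity

variable {X : Type*} [DecidableEq X]

/-- The closed ball of center `x` and radius `r` of the metric space induced by a
diversity (`d(x, y) = δ {x, y}`). -/
def ball (D : Diversity X) (x : X) (r : ℝ) : Set X :=
  {y : X | D.delta {x, y} ≤ r}

/-- Hyperconvexity of the metric space induced by a diversity: every family of closed
balls whose radii are nonnegative and satisfy `d(x_α, x_β) ≤ r_α + r_β` has nonempty
intersection. -/
def InducedHyperconvex (D : Diversity X) : Prop :=
  ∀ s : Set (X × ℝ), (∀ p ∈ s, 0 ≤ p.2) →
    (∀ p ∈ s, ∀ q ∈ s, D.delta {p.1, q.1} ≤ p.2 + q.2) →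
    (⋂ p ∈ s, D.ball p.1 p.2).Nonempty

end Diversity

open Finset

lemma le_csInf_add_csInf {S T : Set ℝ} (hS : S.Nonempty) (hT : T.Nonempty) {c : ℝ}
    (h : ∀ s ∈ S, ∀ t ∈ T, c ≤ s + t) : c ≤ sInf S + sInf T := by
  have h₁ : ∀ s ∈ S, c - s ≤ sInf T :=
    fun s hs => le_csInf hT fun t ht => by linarith [h s hs t ht]
  have h₂ : c - sInf T ≤ sInf S := le_csInf hS fun s hs => by linarith [h₁ s hs]
  linarith

namespace Diversity

section Basic

variable {X : Type*} [DecidableEq X] (D : Diversity X)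

lemma delta_of_card_le_one {A : Finset X} (h : A.card ≤ 1) : D.delta A = 0 :=
  (D.eq_zero_iff A).2 h

@[simp]
lemma delta_singleton (x : X) : D.delta {x} = 0 :=
  D.delta_of_card_le_one (card_singleton x).le

lemma delta_le_delta_insert (x : X) (A : Finset X) : D.delta A ≤ D.delta (insert x A) := by
  simpa using D.triangle A {x} ∅ (singleton_nonempty x)

lemma delta_pair_le (x y z : X) : D.delta {x, z} ≤ D.delta {x, y} + D.delta {y, z} := by
  simpa only [singleton_union] using D.triangle {x} {y} {z} (singleton_nonempty y)

def PairwiseHyperconvex : Prop :=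
  ∀ r : Finset X → ℝ, (∀ Y, D.delta Y ≤ r Y) → (∀ Y Z, D.delta (Y ∪ Z) ≤ r Y + r Z) →
    ∃ z, ∀ Y, D.delta (insert z Y) ≤ r Y

variable {D}

theorem PairwiseHyperconvex.hyperconvex (hD : D.PairwiseHyperconvex) : D.Hyperconvex := by
  intro r _ hr
  have hsingle : ∀ Y, D.delta Y ≤ r Y := fun Y => by simpa using hr {Y}
  refine hD r hsingle fun Y Z => ?_
  obtain rfl | hYZ := eq_or_ne Y Z
  · rw [union_self]
    linarith [hsingle Y, D.nonneg Y]
  · simpa [sum_pair hYZ] using hr {Y, Z}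

theorem PairwiseHyperconvex.inducedHyperconvex [Nonempty X] (hD : D.PairwiseHyperconvex) :
    D.InducedHyperconvex := by
  intro s hs₀ hs
  obtain rfl | hne := s.eq_empty_or_nonempty
  · simp
  -- `r Y` is the cheapest way to reach `Y` from the centre of one of the balls
  set r : Finset X → ℝ := fun Y => sInf ((fun p : X × ℝ => D.delta (insert p.1 Y) + p.2) '' s)
  have hr_le : ∀ Y, ∀ p ∈ s, r Y ≤ D.delta (insert p.1 Y) + p.2 := fun Y p hp =>
    csInf_le ⟨0, by rintro _ ⟨q, hq, rfl⟩; exact add_nonneg (D.nonneg _) (hs₀ q hq)⟩ ⟨p, hp, rfl⟩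
  have hsingle : ∀ Y, D.delta Y ≤ r Y := fun Y => le_csInf (hne.image _) <| by
    rintro _ ⟨p, hp, rfl⟩
    exact (D.delta_le_delta_insert _ _).trans (le_add_of_nonneg_right (hs₀ p hp))
  have hpair : ∀ Y Z, D.delta (Y ∪ Z) ≤ r Y + r Z := fun Y Z =>
    le_csInf_add_csInf (hne.image _) (hne.image _) <| by
      rintro _ ⟨p, hp, rfl⟩ _ ⟨q, hq, rfl⟩
      have h₁ := D.triangle Y {p.1} Z (singleton_nonempty _)
      have h₂ := D.triangle {p.1} {q.1} Z (singleton_nonempty _)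
      simp only [union_singleton, singleton_union, pair_comm q.1] at h₁ h₂
      dsimp only
      linarith [hs p hp q hq]
  obtain ⟨z, hz⟩ := hD r hsingle hpair
  refine ⟨z, Set.mem_iInter₂.2 fun p hp => ?_⟩
  simpa [ball, pair_comm] using (hz {p.1}).trans (hr_le {p.1} p hp)

end Basic

section Diameter

variable {X : Type*} [DecidableEq X] (D : Diversity X)

noncomputable def diam (A : Finset X) : ℝ :=
  if h : A.Nonempty then (A ×ˢ A).sup' (h.product h) fun p => D.delta {p.1, p.2} else 0

variable {D} {A B C : Finset X}

lemma le_diam {x y : X} (hx : x ∈ A) (hy : y ∈ A) : D.delta {x, y} ≤ D.diam A := by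
  rw [diam, dif_pos ⟨x, hx⟩]
  exact le_sup' (fun p : X × X => D.delta {p.1, p.2})
    (show (x, y) ∈ A ×ˢ A from mem_product.2 ⟨hx, hy⟩)

lemma diam_le {c : ℝ} (hc : 0 ≤ c) (h : ∀ x ∈ A, ∀ y ∈ A, D.delta {x, y} ≤ c) :
    D.diam A ≤ c := by
  rw [diam]
  split_ifs with hA
  · exact sup'_le _ _ fun p hp => h _ (mem_product.1 hp).1 _ (mem_product.1 hp).2
  · exact hc

lemma diam_nonneg (A : Finset X) : 0 ≤ D.diam A := by
  obtain rfl | ⟨x, hx⟩ := A.eq_empty_or_nonempty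
  · simp [diam]
  · exact (D.nonneg _).trans (le_diam hx hx)

lemma diam_pair (x y : X) : D.diam {x, y} = D.delta {x, y} := by
  refine le_antisymm (diam_le (D.nonneg _) fun a ha b hb => ?_) (le_diam (by simp) (by simp))
  simp only [mem_insert, mem_singleton] at ha hb
  rcases ha with rfl | rfl <;> rcases hb with rfl | rfl <;> simp [pair_comm, D.nonneg]

lemma diam_eq_zero_iff : D.diam A = 0 ↔ A.card ≤ 1 := by
  refine ⟨fun h => card_le_one.2 fun x hx y hy => ?_, fun h => ?_⟩
  · have h₀ : D.delta {x, y} = 0 := le_antisymm (h ▸ le_diam hx hy) (D.nonneg _)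
    exact card_le_one.1 ((D.eq_zero_iff _).1 h₀) x (by simp) y (by simp)
  · refine le_antisymm (diam_le le_rfl fun x hx y hy => ?_) (diam_nonneg A)
    simp [card_le_one.1 h x hx y hy]

lemma diam_union_le (hB : B.Nonempty) : D.diam (A ∪ C) ≤ D.diam (A ∪ B) + D.diam (B ∪ C) := by
  obtain ⟨b, hb⟩ := hB
  have hAB : b ∈ A ∪ B := mem_union_right _ hb
  have hBC : b ∈ B ∪ C := mem_union_left _ hb
  refine diam_le (add_nonneg (diam_nonneg _) (diam_nonneg _)) fun x hx y hy => ?_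
  rcases mem_union.1 hx with hx | hx <;> rcases mem_union.1 hy with hy | hy
  · linarith [le_diam (D := D) (mem_union_left B hx) (mem_union_left B hy),
      diam_nonneg (D := D) (B ∪ C)]
  · linarith [D.delta_pair_le x b y, le_diam (D := D) (mem_union_left B hx) hAB,
      le_diam (D := D) hBC (mem_union_right B hy)]
  · linarith [D.delta_pair_le x b y, le_diam (D := D) (mem_union_right B hx) hBC,
      le_diam (D := D) hAB (mem_union_left B hy)]
  · linarith [le_diam (D := D) (mem_union_right B hx) (mem_union_right B hy),
      diam_nonneg (D := D) (A ∪ B)]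

variable (D) in
noncomputable def diameter : Diversity X where
  delta := D.diam
  nonneg := diam_nonneg
  eq_zero_iff _ := diam_eq_zero_iff
  triangle _ _ _ := diam_union_le

lemma diameter_delta_pair (x y : X) : D.diameter.delta {x, y} = D.delta {x, y} := diam_pair x y

theorem InducedHyperconvex.pairwiseHyperconvex_diameter (hD : D.InducedHyperconvex) :
    D.diameter.PairwiseHyperconvex := by
  intro r hsingle hpair
  have hr₀ : ∀ Y, 0 ≤ r Y := fun Y => (diam_nonneg Y).trans (hsingle Y)
  set ρ : X → ℝ := fun y => sInf (r '' {Y | y ∈ Y})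
  have hρ_le : ∀ y Y, y ∈ Y → ρ y ≤ r Y := fun y Y hy =>
    csInf_le ⟨0, by rintro _ ⟨Z, -, rfl⟩; exact hr₀ Z⟩ ⟨Y, hy, rfl⟩
  have hρ₀ : ∀ y, 0 ≤ ρ y := fun y => Real.sInf_nonneg (by rintro _ ⟨Z, -, rfl⟩; exact hr₀ Z)
  have hne : ∀ y, (r '' {Y | y ∈ Y}).Nonempty := fun y => ⟨_, {y}, mem_singleton_self y, rfl⟩
  have hρ : ∀ y y', D.delta {y, y'} ≤ ρ y + ρ y' := fun y y' =>
    le_csInf_add_csInf (hne y) (hne y') <| by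
      rintro _ ⟨Y, hy, rfl⟩ _ ⟨Z, hz, rfl⟩
      exact (le_diam (mem_union_left _ hy) (mem_union_right _ hz)).trans (hpair Y Z)
  obtain ⟨z, hz⟩ := hD (Set.range fun y => (y, ρ y)) (by rintro _ ⟨y, rfl⟩; exact hρ₀ y)
    (by rintro _ ⟨y, rfl⟩ _ ⟨y', rfl⟩; exact hρ y y')
  have hzY : ∀ Y, ∀ y ∈ Y, D.delta {y, z} ≤ r Y := fun Y y hy =>
    (Set.mem_iInter₂.1 hz _ ⟨y, rfl⟩ : D.delta {y, z} ≤ ρ y).trans (hρ_le y Y hy)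
  refine ⟨z, fun Y => diam_le (hr₀ Y) fun x hx y hy => ?_⟩
  rcases mem_insert.1 hx with rfl | hxY <;> rcases mem_insert.1 hy with rfl | hyY
  · simpa using hr₀ Y
  · rw [pair_comm]
    exact hzY Y y hyY
  · exact hzY Y x hxY
  · exact (le_diam hxY hyY).trans (hsingle Y)

end Diameter

section Product

variable {α β : Type*} [DecidableEq α] [DecidableEq β]

noncomputable def prod (D₁ : Diversity α) (D₂ : Diversity β) : Diversity (α × β) where
  delta A := max (D₁.delta (A.image Prod.fst)) (D₂.delta (A.image Prod.snd))
  nonneg _ := (D₁.nonneg _).trans (le_max_left _ _)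
  eq_zero_iff A := by
    refine ⟨fun h => card_le_one.2 fun p hp q hq => ?_, fun h => ?_⟩
    · have h₁ := (D₁.eq_zero_iff _).1 (le_antisymm (h ▸ le_max_left _ _) (D₁.nonneg _))
      have h₂ := (D₂.eq_zero_iff _).1 (le_antisymm (h ▸ le_max_right _ _) (D₂.nonneg _))
      exact Prod.ext
        (card_le_one.1 h₁ _ (mem_image_of_mem _ hp) _ (mem_image_of_mem _ hq))
        (card_le_one.1 h₂ _ (mem_image_of_mem _ hp) _ (mem_image_of_mem _ hq))
    · rw [D₁.delta_of_card_le_one (card_image_le.trans h),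
        D₂.delta_of_card_le_one (card_image_le.trans h), max_self]
  triangle A B C hB := by
    simp only [image_union]
    exact max_le
      ((D₁.triangle _ _ _ (hB.image _)).trans (add_le_add (le_max_left _ _) (le_max_left _ _)))
      ((D₂.triangle _ _ _ (hB.image _)).trans (add_le_add (le_max_right _ _) (le_max_right _ _)))

lemma prod_delta_pair (D₁ : Diversity α) (D₂ : Diversity β) (p q : α × β) :
    (D₁.prod D₂).delta {p, q} = max (D₁.delta {p.1, q.1}) (D₂.delta {p.2, q.2}) := by
  simp [prod, image_insert]

lemma prod_delta_image_mk_right (D₁ : Diversity α) (D₂ : Diversity β) (A : Finset α) (b : β) :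
    (D₁.prod D₂).delta (A.image (·, b)) = D₁.delta A := by
  have : (A.image fun a => (a, b).2).card ≤ 1 := card_le_one.2 (by simp)
  simp [prod, image_image, Function.comp_def, D₂.delta_of_card_le_one this, D₁.nonneg]

lemma prod_delta_image_mk_left (D₁ : Diversity α) (D₂ : Diversity β) (a : α) (B : Finset β) :
    (D₁.prod D₂).delta (B.image (a, ·)) = D₂.delta B := by
  have : (B.image fun b => (a, b).1).card ≤ 1 := card_le_one.2 (by simp)
  simp [prod, image_image, Function.comp_def, D₁.delta_of_card_le_one this, D₂.nonneg]

lemma prod_delta_swap_pair {D₁ D₂ : Diversity α} (h : ∀ x y, D₁.delta {x, y} = D₂.delta {x, y})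
    (p q : α × α) : (D₁.prod D₂).delta {p.swap, q.swap} = (D₁.prod D₂).delta {p, q} := by
  rw [prod_delta_pair, prod_delta_pair, h, h]
  exact max_comm _ _

lemma exists_pairwise_bound_of_image {γ : Type*} [DecidableEq γ] {π : γ → β}
    (hπ : Function.Surjective π) {d : Finset β → ℝ} {r : Finset γ → ℝ} (hr₀ : ∀ A, 0 ≤ r A)
    (hsingle : ∀ A, d (A.image π) ≤ r A) (hpair : ∀ A A', d (A.image π ∪ A'.image π) ≤ r A + r A') :
    ∃ r' : Finset β → ℝ, (∀ B, d B ≤ r' B) ∧ (∀ B C, d (B ∪ C) ≤ r' B + r' C) ∧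
      ∀ A, r' (A.image π) ≤ r A := by
  have hne : ∀ B : Finset β, (r '' {A | A.image π = B}).Nonempty := fun B =>
    ⟨_, B.image (Function.surjInv hπ), by simp [image_image, Function.comp_def,
      Function.surjInv_eq hπ], rfl⟩
  refine ⟨fun B => sInf (r '' {A | A.image π = B}), fun B => le_csInf (hne B) ?_,
    fun B C => le_csInf_add_csInf (hne B) (hne C) ?_,
    fun A => csInf_le ⟨0, by rintro _ ⟨A', -, rfl⟩; exact hr₀ A'⟩ ⟨A, rfl, rfl⟩⟩
  · rintro _ ⟨A, rfl, rfl⟩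
    exact hsingle A
  · rintro _ ⟨A, rfl, rfl⟩ _ ⟨A', rfl, rfl⟩
    exact hpair A A'

theorem PairwiseHyperconvex.prod [Nonempty α] [Nonempty β] {D₁ : Diversity α}
    {D₂ : Diversity β} (h₁ : D₁.PairwiseHyperconvex) (h₂ : D₂.PairwiseHyperconvex) :
    (D₁.prod D₂).PairwiseHyperconvex := by
  intro r hsingle hpair
  have hr₀ : ∀ A, 0 ≤ r A := fun A => ((D₁.prod D₂).nonneg A).trans (hsingle A)
  obtain ⟨r₁, hs₁, hp₁, hr₁⟩ := exists_pairwise_bound_of_image Prod.fst_surjective hr₀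
    (fun A => (le_max_left _ _).trans (hsingle A))
    (fun A A' => by simpa only [image_union] using (le_max_left _ _).trans (hpair A A'))
  obtain ⟨r₂, hs₂, hp₂, hr₂⟩ := exists_pairwise_bound_of_image Prod.snd_surjective hr₀
    (fun A => (le_max_right _ _).trans (hsingle A))
    (fun A A' => by simpa only [image_union] using (le_max_right _ _).trans (hpair A A'))
  obtain ⟨z₁, hz₁⟩ := h₁ r₁ hs₁ hp₁
  obtain ⟨z₂, hz₂⟩ := h₂ r₂ hs₂ hp₂
  refine ⟨(z₁, z₂), fun A => max_le ?_ ?_⟩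
  · simpa only [image_insert] using (hz₁ _).trans (hr₁ A)
  · simpa only [image_insert] using (hz₂ _).trans (hr₂ A)

end Product

end Diversity

section CoordinateRange

variable {α : Type*} (f : α → ℝ)

noncomputable def rangeMax (A : Finset α) : ℝ := if h : A.Nonempty then A.sup' h f else 0

noncomputable def rangeMin (A : Finset α) : ℝ := if h : A.Nonempty then A.inf' h f else 0

noncomputable def rangeWidth (A : Finset α) : ℝ := rangeMax f A - rangeMin f A

noncomputable def widthWithZero (A : Finset α) : ℝ := max (rangeMax f A) 0 - min (rangeMin f A) 0

variable {f} {A B C : Finset α} {p q : α}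

lemma le_rangeMax (hp : p ∈ A) : f p ≤ rangeMax f A := by
  rw [rangeMax, dif_pos ⟨p, hp⟩]
  exact le_sup' f hp

lemma rangeMin_le (hp : p ∈ A) : rangeMin f A ≤ f p := by
  rw [rangeMin, dif_pos ⟨p, hp⟩]
  exact inf'_le f hp

lemma exists_mem_rangeMax_eq (hA : A.Nonempty) : ∃ p ∈ A, rangeMax f A = f p := by
  rw [rangeMax, dif_pos hA]
  exact exists_mem_eq_sup' hA f

lemma exists_mem_rangeMin_eq (hA : A.Nonempty) : ∃ p ∈ A, rangeMin f A = f p := by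
  rw [rangeMin, dif_pos hA]
  exact exists_mem_eq_inf' hA f

lemma rangeMax_eq_of_forall {c : ℝ} (hA : A.Nonempty) (h : ∀ p ∈ A, f p = c) :
    rangeMax f A = c := by
  obtain ⟨p, hp, e⟩ := exists_mem_rangeMax_eq (f := f) hA
  exact e.trans (h p hp)

lemma rangeMin_eq_of_forall {c : ℝ} (hA : A.Nonempty) (h : ∀ p ∈ A, f p = c) :
    rangeMin f A = c := by
  obtain ⟨p, hp, e⟩ := exists_mem_rangeMin_eq (f := f) hA
  exact e.trans (h p hp)

lemma rangeMin_le_rangeMax (hA : A.Nonempty) : rangeMin f A ≤ rangeMax f A :=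
  (rangeMin_le hA.choose_spec).trans (le_rangeMax hA.choose_spec)

@[simp]
lemma rangeMax_singleton : rangeMax f {p} = f p :=
  rangeMax_eq_of_forall (singleton_nonempty p) fun _ h => by rw [mem_singleton.1 h]

@[simp]
lemma rangeMin_singleton : rangeMin f {p} = f p :=
  rangeMin_eq_of_forall (singleton_nonempty p) fun _ h => by rw [mem_singleton.1 h]

lemma rangeWidth_nonneg (A : Finset α) : 0 ≤ rangeWidth f A := by
  obtain rfl | hA := A.eq_empty_or_nonempty
  · simp [rangeWidth, rangeMax, rangeMin]
  · exact sub_nonneg.2 (rangeMin_le_rangeMax hA)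

lemma sub_le_rangeWidth (hp : p ∈ A) (hq : q ∈ A) : f p - f q ≤ rangeWidth f A :=
  sub_le_sub (le_rangeMax hp) (rangeMin_le hq)

lemma rangeWidth_le {c : ℝ} (hc : 0 ≤ c) (h : ∀ p ∈ A, ∀ q ∈ A, f p - f q ≤ c) :
    rangeWidth f A ≤ c := by
  obtain rfl | hA := A.eq_empty_or_nonempty
  · simpa [rangeWidth, rangeMax, rangeMin] using hc
  obtain ⟨p, hp, hp'⟩ := exists_mem_rangeMax_eq (f := f) hA
  obtain ⟨q, hq, hq'⟩ := exists_mem_rangeMin_eq (f := f) hA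
  rw [rangeWidth, hp', hq']
  exact h p hp q hq

lemma rangeMax_le_widthWithZero (A : Finset α) : rangeMax f A ≤ widthWithZero f A := by
  rw [widthWithZero]
  linarith [le_max_left (rangeMax f A) 0, min_le_right (rangeMin f A) 0]

lemma neg_rangeMin_le_widthWithZero (A : Finset α) : -rangeMin f A ≤ widthWithZero f A := by
  rw [widthWithZero]
  linarith [le_max_right (rangeMax f A) 0, min_le_left (rangeMin f A) 0]

lemma widthWithZero_eq_rangeWidth (h₁ : rangeMin f A ≤ 0) (h₂ : 0 ≤ rangeMax f A) :
    widthWithZero f A = rangeWidth f A := by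
  rw [widthWithZero, max_eq_left h₂, min_eq_left h₁, rangeWidth]

variable [DecidableEq α]

lemma rangeMax_union (hA : A.Nonempty) (hB : B.Nonempty) :
    rangeMax f (A ∪ B) = max (rangeMax f A) (rangeMax f B) := by
  rw [rangeMax, rangeMax, rangeMax, dif_pos hA, dif_pos hB, dif_pos (hA.mono subset_union_left)]
  exact sup'_union hA hB f

lemma rangeMin_union (hA : A.Nonempty) (hB : B.Nonempty) :
    rangeMin f (A ∪ B) = min (rangeMin f A) (rangeMin f B) := by
  rw [rangeMin, rangeMin, rangeMin, dif_pos hA, dif_pos hB, dif_pos (hA.mono subset_union_left)]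
  exact inf'_union hA hB f

lemma rangeMax_insert (hA : A.Nonempty) : rangeMax f (insert p A) = max (f p) (rangeMax f A) := by
  rw [rangeMax, rangeMax, dif_pos hA, dif_pos (insert_nonempty p A)]
  exact sup'_insert hA f

lemma rangeMin_insert (hA : A.Nonempty) : rangeMin f (insert p A) = min (f p) (rangeMin f A) := by
  rw [rangeMin, rangeMin, dif_pos hA, dif_pos (insert_nonempty p A)]
  exact inf'_insert hA f

lemma rangeWidth_pair : rangeWidth f {p, q} = |f p - f q| := by
  rw [rangeWidth, rangeMax_insert (singleton_nonempty q), rangeMin_insert (singleton_nonempty q),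
    rangeMax_singleton, rangeMin_singleton, max_sub_min_eq_abs, abs_sub_comm]

lemma rangeWidth_union_le (hB : B.Nonempty) :
    rangeWidth f (A ∪ C) ≤ rangeWidth f (A ∪ B) + rangeWidth f (B ∪ C) := by
  obtain ⟨b, hb⟩ := hB
  have hAB : b ∈ A ∪ B := mem_union_right _ hb
  have hBC : b ∈ B ∪ C := mem_union_left _ hb
  refine rangeWidth_le (add_nonneg (rangeWidth_nonneg _) (rangeWidth_nonneg _)) fun x hx y hy => ?_
  rcases mem_union.1 hx with hx | hx <;> rcases mem_union.1 hy with hy | hy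
  · linarith [sub_le_rangeWidth (f := f) (mem_union_left B hx) (mem_union_left B hy),
      rangeWidth_nonneg (f := f) (B ∪ C)]
  · linarith [sub_le_rangeWidth (f := f) (mem_union_left B hx) hAB,
      sub_le_rangeWidth (f := f) hBC (mem_union_right B hy)]
  · linarith [sub_le_rangeWidth (f := f) (mem_union_right B hx) hBC,
      sub_le_rangeWidth (f := f) hAB (mem_union_left B hy)]
  · linarith [sub_le_rangeWidth (f := f) (mem_union_right B hx) (mem_union_right B hy),
      rangeWidth_nonneg (f := f) (A ∪ B)]

end CoordinateRange

lemma exists_forall_le_le {ι : Type*} [Nonempty ι] {a b : ι → ℝ} (h : ∀ i j, a i ≤ b j) :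
    ∃ u, ∀ i, a i ≤ u ∧ u ≤ b i :=
  ⟨⨆ i, a i, fun i =>
    ⟨le_ciSup ⟨b i, by rintro _ ⟨j, rfl⟩; exact h j i⟩ i, ciSup_le fun j => h j i⟩⟩

section AxisHelly

variable {ι : Type*} {P Q : ι → Prop} {a b c e : ι → ℝ}

lemma exists_axis_point_of_not (hcentre : ∀ i, P i → Q i → a i ≤ 0 ∧ 0 ≤ b i ∧ c i ≤ 0 ∧ 0 ≤ e i)
    (hpair : ∀ i j, (P i ∧ P j ∧ a i ≤ b j) ∨ (Q i ∧ Q j ∧ c i ≤ e j)) {i₀ : ι} (h₀ : ¬Q i₀) :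
    ∃ u, ∀ i, P i ∧ a i ≤ u ∧ u ≤ b i := by
  have hP : ∀ i, P i := fun i => ((hpair i₀ i).resolve_right fun h => h₀ h.1).2.1
  have : Nonempty ι := ⟨i₀⟩
  obtain ⟨u, hu⟩ := exists_forall_le_le fun i j => (hpair i j).elim (fun h => h.2.2)
    fun h => (hcentre i (hP i) h.1).1.trans (hcentre j (hP j) h.2.1).2.1
  exact ⟨u, fun i => ⟨hP i, hu i⟩⟩

/-- Helly's theorem for a family of connected closed subsets of the union of two crossing lines:
the `i`-th set meets the first line in `[a i, b i]` if `P i` (and not at all otherwise) and the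
second line in `[c i, e i]` if `Q i`, and `hcentre` says that a set meeting both lines contains
their crossing point. -/
theorem exists_axis_point (hcentre : ∀ i, P i → Q i → a i ≤ 0 ∧ 0 ≤ b i ∧ c i ≤ 0 ∧ 0 ≤ e i)
    (hpair : ∀ i j, (P i ∧ P j ∧ a i ≤ b j) ∨ (Q i ∧ Q j ∧ c i ≤ e j)) :
    (∃ u, ∀ i, P i ∧ a i ≤ u ∧ u ≤ b i) ∨ (∃ v, ∀ i, Q i ∧ c i ≤ v ∧ v ≤ e i) := by
  by_cases hQ : ∀ i, Q i
  · by_cases hP : ∀ i, P i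
    · exact Or.inl ⟨0, fun i => ⟨hP i, (hcentre i (hP i) (hQ i)).1, (hcentre i (hP i) (hQ i)).2.1⟩⟩
    · obtain ⟨i₀, h₀⟩ := not_forall.1 hP
      refine Or.inr (exists_axis_point_of_not (fun i hq hp => ?_) (fun i j => (hpair i j).symm) h₀)
      obtain ⟨h₁, h₂, h₃, h₄⟩ := hcentre i hp hq
      exact ⟨h₃, h₄, h₁, h₂⟩
  · obtain ⟨i₀, h₀⟩ := not_forall.1 hQ
    exact Or.inl (exists_axis_point_of_not hcentre hpair h₀)

end AxisHelly

section AxisConstraint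

variable {α : Type*} (f g : α → ℝ) (r : Finset α → ℝ)

/- For `p` with `g p = 0`, `rangeWidth f (insert p Y) + rangeWidth g (insert p Y) ≤ r Y` holds
exactly when `AxisFeasible f g r Y` and `axisLower f g r Y ≤ f p ≤ axisUpper f g r Y`. -/

def AxisFeasible (Y : Finset α) : Prop := rangeWidth f Y ≤ r Y - widthWithZero g Y

noncomputable def axisLower (Y : Finset α) : ℝ := rangeMax f Y - (r Y - widthWithZero g Y)

noncomputable def axisUpper (Y : Finset α) : ℝ := rangeMin f Y + (r Y - widthWithZero g Y)

def AxisLinked (Y Z : Finset α) : Prop :=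
  AxisFeasible f g r Y ∧ AxisFeasible f g r Z ∧ axisLower f g r Y ≤ axisUpper f g r Z

variable {f g r} {Y Z : Finset α}

lemma widthWithZero_add_le (hfg : ∀ p, f p = 0 ∨ g p = 0) (hY : Y.Nonempty)
    (hf : AxisFeasible f g r Y) (hg : AxisFeasible g f r Y) :
    widthWithZero f Y + widthWithZero g Y ≤ r Y := by
  obtain ⟨p, hp⟩ := hY
  unfold AxisFeasible at hf hg
  rcases hfg p with h | h
  · have h₁ : rangeMin f Y ≤ 0 := h ▸ rangeMin_le hp
    have h₂ : 0 ≤ rangeMax f Y := h ▸ le_rangeMax hp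
    linarith [widthWithZero_eq_rangeWidth h₁ h₂]
  · have h₁ : rangeMin g Y ≤ 0 := h ▸ rangeMin_le hp
    have h₂ : 0 ≤ rangeMax g Y := h ▸ le_rangeMax hp
    linarith [widthWithZero_eq_rangeWidth h₁ h₂]

lemma zero_mem_axis_intervals (hfg : ∀ p, f p = 0 ∨ g p = 0) (hY : Y.Nonempty)
    (hf : AxisFeasible f g r Y) (hg : AxisFeasible g f r Y) :
    axisLower f g r Y ≤ 0 ∧ 0 ≤ axisUpper f g r Y ∧ axisLower g f r Y ≤ 0 ∧
      0 ≤ axisUpper g f r Y := by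
  have := widthWithZero_add_le hfg hY hf hg
  have := rangeMax_le_widthWithZero (f := f) Y
  have := rangeMax_le_widthWithZero (f := g) Y
  have := neg_rangeMin_le_widthWithZero (f := f) Y
  have := neg_rangeMin_le_widthWithZero (f := g) Y
  simp only [axisLower, axisUpper]
  refine ⟨?_, ?_, ?_, ?_⟩ <;> linarith

lemma range_cases (hfg : ∀ p, f p = 0 ∨ g p = 0) (hY : Y.Nonempty) :
    (rangeMin g Y = 0 ∧ rangeMax g Y = 0) ∨ (rangeMin f Y = 0 ∧ rangeMax f Y = 0) ∨
      ((rangeMin f Y ≤ 0 ∧ 0 ≤ rangeMax f Y) ∧ (rangeMin g Y ≤ 0 ∧ 0 ≤ rangeMax g Y)) := by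
  by_cases hg : ∀ p ∈ Y, g p = 0
  · exact Or.inl ⟨rangeMin_eq_of_forall hY hg, rangeMax_eq_of_forall hY hg⟩
  by_cases hf : ∀ p ∈ Y, f p = 0
  · exact Or.inr (Or.inl ⟨rangeMin_eq_of_forall hY hf, rangeMax_eq_of_forall hY hf⟩)
  obtain ⟨p, hp, hgp⟩ : ∃ p ∈ Y, g p ≠ 0 := by simpa using hg
  obtain ⟨q, hq, hfq⟩ : ∃ q ∈ Y, f q ≠ 0 := by simpa using hf
  have hfp : f p = 0 := (hfg p).resolve_right hgp
  have hgq : g q = 0 := (hfg q).resolve_left hfq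
  exact Or.inr (Or.inr ⟨⟨hfp ▸ rangeMin_le hp, hfp ▸ le_rangeMax hp⟩,
    ⟨hgq ▸ rangeMin_le hq, hgq ▸ le_rangeMax hq⟩⟩)

lemma axisLinked_of_centre (hsingle : ∀ Y, rangeWidth f Y + rangeWidth g Y ≤ r Y)
    (hfY : rangeMin f Y ≤ 0 ∧ 0 ≤ rangeMax f Y) (hgY : rangeMin g Y ≤ 0 ∧ 0 ≤ rangeMax g Y)
    (hfZ : rangeMin f Z ≤ 0 ∧ 0 ≤ rangeMax f Z) (hgZ : rangeMin g Z ≤ 0 ∧ 0 ≤ rangeMax g Z) :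
    AxisLinked f g r Y Z := by
  have := widthWithZero_eq_rangeWidth hgY.1 hgY.2
  have := widthWithZero_eq_rangeWidth hgZ.1 hgZ.2
  have := hsingle Y
  have := hsingle Z
  simp only [AxisLinked, AxisFeasible, axisLower, axisUpper, rangeWidth] at *
  refine ⟨?_, ?_, ?_⟩ <;> linarith

variable [DecidableEq α]

lemma rangeWidth_insert_add_le (hY : Y.Nonempty) {p : α} (hp : g p = 0)
    (hfeas : AxisFeasible f g r Y) (hlo : axisLower f g r Y ≤ f p)
    (hhi : f p ≤ axisUpper f g r Y) :
    rangeWidth f (insert p Y) + rangeWidth g (insert p Y) ≤ r Y := by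
  have := rangeMin_le_rangeMax (f := f) hY
  simp only [AxisFeasible, axisLower, axisUpper, widthWithZero, rangeWidth] at *
  rw [rangeMax_insert hY, rangeMin_insert hY, rangeMax_insert hY, rangeMin_insert hY, hp,
    max_comm 0, min_comm 0]
  rcases max_cases (f p) (rangeMax f Y) with ⟨h₁, -⟩ | ⟨h₁, -⟩ <;>
    rcases min_cases (f p) (rangeMin f Y) with ⟨h₂, -⟩ | ⟨h₂, -⟩ <;> rw [h₁, h₂] <;> linarith

lemma axisLinked_of_onAxis (hsingle : ∀ Y, rangeWidth f Y + rangeWidth g Y ≤ r Y)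
    (hpair : ∀ Y Z, rangeWidth f (Y ∪ Z) + rangeWidth g (Y ∪ Z) ≤ r Y + r Z)
    (hY : Y.Nonempty) (hZ : Z.Nonempty)
    (hgY : rangeMin g Y = 0 ∧ rangeMax g Y = 0) (hgZ : rangeMin g Z ≤ 0 ∧ 0 ≤ rangeMax g Z) :
    AxisLinked f g r Y Z ∧ AxisLinked f g r Z Y := by
  have hYZ := hpair Y Z
  have := hsingle Y
  have := hsingle Z
  have := widthWithZero_eq_rangeWidth hgZ.1 hgZ.2
  have := le_max_left (rangeMax f Y) (rangeMax f Z)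
  have := le_max_right (rangeMax f Y) (rangeMax f Z)
  have := min_le_left (rangeMin f Y) (rangeMin f Z)
  have := min_le_right (rangeMin f Y) (rangeMin f Z)
  rw [rangeWidth, rangeWidth, rangeMax_union hY hZ, rangeMin_union hY hZ, rangeMax_union hY hZ,
    rangeMin_union hY hZ, hgY.1, hgY.2, max_eq_right hgZ.2, min_eq_right hgZ.1] at hYZ
  simp only [AxisLinked, AxisFeasible, axisLower, axisUpper, widthWithZero, rangeWidth, hgY.1,
    hgY.2, max_self, min_self, sub_self, add_zero, sub_zero] at *
  refine ⟨⟨?_, ?_, ?_⟩, ?_, ?_, ?_⟩ <;> linarith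

lemma axisLinked_or_of_onAxis (hsingle : ∀ Y, rangeWidth f Y + rangeWidth g Y ≤ r Y)
    (hpair : ∀ Y Z, rangeWidth f (Y ∪ Z) + rangeWidth g (Y ∪ Z) ≤ r Y + r Z)
    (hY : Y.Nonempty) (hZ : Z.Nonempty)
    (hgY : rangeMin g Y = 0 ∧ rangeMax g Y = 0) (hfZ : rangeMin f Z = 0 ∧ rangeMax f Z = 0) :
    AxisLinked f g r Y Z ∨ AxisLinked g f r Y Z := by
  have hYZ := hpair Y Z
  have := hsingle Y
  have := hsingle Z
  have := rangeMax_le_widthWithZero (f := f) Y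
  have := neg_rangeMin_le_widthWithZero (f := g) Z
  rw [rangeWidth, rangeWidth, rangeMax_union hY hZ, rangeMin_union hY hZ, rangeMax_union hY hZ,
    rangeMin_union hY hZ, hgY.1, hgY.2, hfZ.1, hfZ.2, max_comm 0, min_comm 0] at hYZ
  simp only [AxisLinked, AxisFeasible, axisLower, axisUpper, rangeWidth, widthWithZero, hgY.1,
    hgY.2, hfZ.1, hfZ.2, max_self, min_self, sub_self, add_zero, zero_add] at *
  by_cases h : max (rangeMax g Z) 0 - min (rangeMin g Z) 0 ≤ r Z
  · exact Or.inl ⟨by linarith, by linarith, by linarith⟩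
  · exact Or.inr ⟨by linarith, by linarith, by linarith⟩

theorem axisLinked_or (hfg : ∀ p, f p = 0 ∨ g p = 0)
    (hsingle : ∀ Y, rangeWidth f Y + rangeWidth g Y ≤ r Y)
    (hpair : ∀ Y Z, rangeWidth f (Y ∪ Z) + rangeWidth g (Y ∪ Z) ≤ r Y + r Z)
    (hY : Y.Nonempty) (hZ : Z.Nonempty) : AxisLinked f g r Y Z ∨ AxisLinked g f r Y Z := by
  have hsingle' : ∀ Y, rangeWidth g Y + rangeWidth f Y ≤ r Y := fun Y => by linarith [hsingle Y]
  have hpair' : ∀ Y Z, rangeWidth g (Y ∪ Z) + rangeWidth f (Y ∪ Z) ≤ r Y + r Z :=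
    fun Y Z => by linarith [hpair Y Z]
  rcases range_cases hfg hY with hY' | hY' | hY' <;>
    rcases range_cases hfg hZ with hZ' | hZ' | hZ'
  · exact Or.inl (axisLinked_of_onAxis hsingle hpair hY hZ hY' ⟨hZ'.1.le, hZ'.2.ge⟩).1
  · exact axisLinked_or_of_onAxis hsingle hpair hY hZ hY' hZ'
  · exact Or.inl (axisLinked_of_onAxis hsingle hpair hY hZ hY' hZ'.2).1
  · exact (axisLinked_or_of_onAxis hsingle' hpair' hY hZ hY' hZ').symm
  · exact Or.inr (axisLinked_of_onAxis hsingle' hpair' hY hZ hY' ⟨hZ'.1.le, hZ'.2.ge⟩).1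
  · exact Or.inr (axisLinked_of_onAxis hsingle' hpair' hY hZ hY' hZ'.1).1
  · exact Or.inl (axisLinked_of_onAxis hsingle hpair hZ hY hZ' hY'.2).2
  · exact Or.inr (axisLinked_of_onAxis hsingle' hpair' hZ hY hZ' hY'.1).2
  · exact Or.inl (axisLinked_of_centre hsingle hY'.1 hY'.2 hZ'.1 hZ'.2)

end AxisConstraint

/-- The two coordinate axes of the plane, an `ℝ`-tree for the `ℓ¹` distance. -/
abbrev AxisCross : Type := {p : ℝ × ℝ // p.1 = 0 ∨ p.2 = 0}

namespace AxisCross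

instance : Inhabited AxisCross := ⟨⟨(0, 0), Or.inl rfl⟩⟩

def x (p : AxisCross) : ℝ := p.1.1

def y (p : AxisCross) : ℝ := p.1.2

lemma x_eq_zero_or_y_eq_zero (p : AxisCross) : x p = 0 ∨ y p = 0 := p.2

/-- The Steiner diversity: the sum of the two coordinate widths of a finite set is the length of
the subtree it spans. -/
noncomputable def steiner : Diversity AxisCross where
  delta A := rangeWidth x A + rangeWidth y A
  nonneg A := add_nonneg (rangeWidth_nonneg A) (rangeWidth_nonneg A)
  eq_zero_iff A := by
    refine ⟨fun h => card_le_one.2 fun p hp q hq => ?_, fun h => ?_⟩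
    · have := rangeWidth_nonneg (f := x) A
      have := rangeWidth_nonneg (f := y) A
      have := sub_le_rangeWidth (f := x) hp hq
      have := sub_le_rangeWidth (f := x) hq hp
      have := sub_le_rangeWidth (f := y) hp hq
      have := sub_le_rangeWidth (f := y) hq hp
      exact Subtype.ext (Prod.ext (show x p = x q by linarith) (show y p = y q by linarith))
    · have hw : ∀ f : AxisCross → ℝ, rangeWidth f A = 0 := fun f =>
        le_antisymm (rangeWidth_le le_rfl fun p hp q hq => by
          rw [card_le_one.1 h p hp q hq, sub_self]) (rangeWidth_nonneg A)
      rw [hw, hw, add_zero]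
  triangle A B C hB := by
    linarith [rangeWidth_union_le (f := x) (A := A) (C := C) hB,
      rangeWidth_union_le (f := y) (A := A) (C := C) hB]

theorem steiner_pairwiseHyperconvex : steiner.PairwiseHyperconvex := by
  intro r hsingle hpair
  suffices ∃ z, ∀ Y : Finset AxisCross, Y.Nonempty → steiner.delta (insert z Y) ≤ r Y by
    obtain ⟨z, hz⟩ := this
    refine ⟨z, fun Y => ?_⟩
    obtain rfl | hY := Y.eq_empty_or_nonempty
    · simpa using (steiner.nonneg ∅).trans (hsingle ∅)
    · exact hz Y hY
  obtain ⟨u, hu⟩ | ⟨v, hv⟩ := exists_axis_point (ι := {Y : Finset AxisCross // Y.Nonempty})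
    (fun Y => zero_mem_axis_intervals x_eq_zero_or_y_eq_zero Y.2)
    (fun Y Z => axisLinked_or x_eq_zero_or_y_eq_zero hsingle hpair Y.2 Z.2)
  · refine ⟨⟨(u, 0), Or.inr rfl⟩, fun Y hY => ?_⟩
    obtain ⟨h₁, h₂, h₃⟩ := hu ⟨Y, hY⟩
    exact rangeWidth_insert_add_le hY rfl h₁ h₂ h₃
  · refine ⟨⟨(0, v), Or.inl rfl⟩, fun Y hY => ?_⟩
    obtain ⟨h₁, h₂, h₃⟩ := hv ⟨Y, hY⟩
    exact (add_comm _ _).le.trans (rangeWidth_insert_add_le hY rfl h₁ h₂ h₃)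

noncomputable def tripod : Finset AxisCross :=
  {⟨(1, 0), Or.inr rfl⟩, ⟨(0, 1), Or.inl rfl⟩, ⟨(0, -1), Or.inl rfl⟩}

lemma steiner_delta_tripod : steiner.delta tripod = 3 := by
  simp [steiner, tripod, rangeWidth, rangeMax_insert, rangeMin_insert, x, y]
  norm_num

lemma diameter_delta_tripod : steiner.diameter.delta tripod = 2 := by
  refine le_antisymm (Diversity.diam_le (by norm_num) ?_) ?_
  · simp only [tripod, mem_insert, mem_singleton]
    rintro p (rfl | rfl | rfl) q (rfl | rfl | rfl) <;> norm_num [steiner, rangeWidth_pair, x, y]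
  · calc (2 : ℝ) = steiner.delta {⟨(0, 1), Or.inl rfl⟩, ⟨(0, -1), Or.inl rfl⟩} := by
          norm_num [steiner, rangeWidth_pair, x, y]
      _ ≤ _ := Diversity.le_diam (by simp [tripod]) (by simp [tripod])

end AxisCross

/-- There exist a hyperconvex diversity `(X, δ)` whose induced metric
space is a hyperconvex metric space, and a map `T : X → X` which is an isometry (hence
nonexpansive) for the induced metric `d(x,y) = δ {x,y}`, but which is not nonexpansive
in the sense of diversities: `δ(T(A)) > δ(A)` for some finite `A ⊆ X`. -/
theorem exists_metric_nonexpansive_not_diversity_nonexpansive :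
    ∃ (X : Type) (_ : DecidableEq X) (D : Diversity X) (T : X → X),
      D.Hyperconvex ∧ D.InducedHyperconvex ∧
      (∀ x y : X, D.delta {T x, T y} = D.delta {x, y}) ∧
      ∃ A : Finset X, D.delta A < D.delta (A.image T) := by
  have hS := AxisCross.steiner_pairwiseHyperconvex
  have hD := hS.inducedHyperconvex.pairwiseHyperconvex_diameter.prod hS
  refine ⟨AxisCross × AxisCross, inferInstance, AxisCross.steiner.diameter.prod AxisCross.steiner,
    Prod.swap, hD.hyperconvex, hD.inducedHyperconvex,
    Diversity.prod_delta_swap_pair Diversity.diameter_delta_pair,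
    AxisCross.tripod.image (·, default), ?_⟩
  have hswap : (AxisCross.tripod.image (·, default)).image Prod.swap =
      AxisCross.tripod.image ((default : AxisCross), ·) := by
    rw [image_image]
    rfl
  rw [hswap, Diversity.prod_delta_image_mk_right, Diversity.prod_delta_image_mk_left,
    AxisCross.diameter_delta_tripod, AxisCross.steiner_delta_tripod]
  norm_num
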